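/- For every simple root α_i, the operators 𝒯⁻_i and 𝒯⁺_i on Fun(W,Q) are adjoint to each other with respect to the localization pairing: ⟨𝒯⁻_i(f), g⟩ = ⟨f, 𝒯⁺_i(g)⟩ for all f, g ∈ Fun(W,Q), where ⟨f,g⟩ := Σ_{u∈W} f(u)·g(u) / ( ∏_{α∈Φ⁺} (1−e^{uα})(1−q e^{−uα}) ) ∈ Q. -/

import Mathlib

/-
STATEMENT 13: For every simple root α_i, the operators 𝒯⁻_i and 𝒯⁺_i on Fun(W,Q) are
adjoint to each other with respect to the localization pairing:
⟨𝒯⁻_i(f), g⟩ = ⟨f, 𝒯⁺_i(g)⟩ for all f, g ∈ Fun(W,Q), where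
⟨f,g⟩ := Σ_{u∈W} f(u)·g(u) / ∏_{α∈Φ⁺} (1−e^{uα})(1−q e^{−uα}).
-/

open scoped Classical

set_option maxHeartbeats 1000000
set_option synthInstance.maxHeartbeats 400000

noncomputable section

/-- `Q = Frac(ℤ[q^{1/2},q^{-1/2}][Λ])`, the fraction field of the group algebra of the weight
lattice `Λ` over the Laurent polynomial ring `ℤ[q^{1/2},q^{-1/2}]` (the Laurent variable is
`q^{1/2}`). -/
abbrev Qf (Λ : Type*) [AddCommGroup Λ] : Type _ :=
  FractionRing (AddMonoidAlgebra (LaurentPolynomial ℤ) Λ)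

/-- `e^λ ∈ Q`. -/
def E {Λ : Type*} [AddCommGroup Λ] (l : Λ) : Qf Λ :=
  algebraMap (AddMonoidAlgebra (LaurentPolynomial ℤ) Λ) (Qf Λ) (AddMonoidAlgebra.single l 1)

/-- `q^{1/2} ∈ Q`. -/
def qh (Λ : Type*) [AddCommGroup Λ] : Qf Λ :=
  algebraMap (AddMonoidAlgebra (LaurentPolynomial ℤ) Λ) (Qf Λ)
    (AddMonoidAlgebra.single 0 (LaurentPolynomial.T 1))

/-- The automorphism group structure that `Λ ≃+ Λ` carried in the older Mathlib
(`AddAut Λ` was a multiplicative group there, with `e₁ * e₂ = e₂.trans e₁`). -/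
instance addEquivSelfGroupOld {Λ : Type*} [AddCommGroup Λ] : Group (Λ ≃+ Λ) :=
  inferInstanceAs (Group (Multiplicative (AddAut Λ)))

variable {n : ℕ} {W : Type*} [Group W] {M : CoxeterMatrix (Fin n)} (cs : CoxeterSystem M W)
variable {Λ : Type*} [AddCommGroup Λ] [IsDomain (AddMonoidAlgebra (LaurentPolynomial ℤ) Λ)]

/-- The operator `𝒯⁺_i` on `Fun(W,Q)`:
`(𝒯⁺_i f)(w) = ((q−1)/(1−e^{wα_i}))·f(w) + ((q−e^{wα_i})/(1−e^{−wα_i}))·f(w s_i)`. -/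
def TP (σ : W →* (Λ ≃+ Λ)) (α : Fin n → Λ) (i : Fin n) (f : W → Qf Λ) : W → Qf Λ := fun w =>
  (qh Λ ^ 2 - 1) / (1 - E (σ w (α i))) * f w +
    (qh Λ ^ 2 - E (σ w (α i))) / (1 - E (-(σ w (α i)))) * f (w * cs.simple i)

/-- The operator `𝒯⁻_i` on `Fun(W,Q)`:
`(𝒯⁻_i f)(w) = ((q−1)/(1−e^{wα_i}))·f(w) + ((1−q e^{−wα_i})/(1−e^{wα_i}))·f(w s_i)`. -/
def TM (σ : W →* (Λ ≃+ Λ)) (α : Fin n → Λ) (i : Fin n) (f : W → Qf Λ) : W → Qf Λ := fun w =>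
  (qh Λ ^ 2 - 1) / (1 - E (σ w (α i))) * f w +
    (1 - qh Λ ^ 2 * E (-(σ w (α i)))) / (1 - E (σ w (α i))) * f (w * cs.simple i)

/-- Composite `𝒯⁺_{i_1} ∘ ⋯ ∘ 𝒯⁺_{i_l}` along a word `ω = [i_1, …, i_l]`. -/
def TPcomp (σ : W →* (Λ ≃+ Λ)) (α : Fin n → Λ) (ω : List (Fin n)) : (W → Qf Λ) → (W → Qf Λ) :=
  ω.foldr (fun i g => TP cs σ α i ∘ g) id

/-- Composite `𝒯⁻_{i_1} ∘ ⋯ ∘ 𝒯⁻_{i_l}` along a word `ω = [i_1, …, i_l]`. -/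
def TMcomp (σ : W →* (Λ ≃+ Λ)) (α : Fin n → Λ) (ω : List (Fin n)) : (W → Qf Λ) → (W → Qf Λ) :=
  ω.foldr (fun i g => TM cs σ α i ∘ g) id

/-- The indicator function `f_v` of `v ∈ W`. -/
def fdelta (v : W) : W → Qf Λ := fun u => if u = v then 1 else 0

/-- `x_{−w₀} = ∏_{α∈Φ⁺} (1−e^{α})`. -/
def xneg (Φp : Finset Λ) : Qf Λ := ∏ a ∈ Φp, (1 - E a)

/-- The stable basis element
`stab⁺_w := q^{−ℓ(w)/2}·𝒯⁺_{w⁻¹}(x_{−w₀}·f_e)`, where `𝒯⁺_{w⁻¹}` is computed along the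
chosen reduced word `red w⁻¹`. -/
def stabP (σ : W →* (Λ ≃+ Λ)) (Φp : Finset Λ) (α : Fin n → Λ) (red : W → List (Fin n))
    (w : W) : W → Qf Λ := fun u =>
  qh Λ ^ (-(cs.length w : ℤ)) *
    TPcomp cs σ α (red w⁻¹) (fun v => xneg Φp * fdelta (1 : W) v) u

/-- The (strong) Bruhat order on `W`: `u ≤ w` iff some reduced word for `w` has a subword
whose product is `u`. -/
def BruhatLE (u w : W) : Prop :=
  ∃ ω : List (Fin n), cs.wordProd ω = w ∧ ω.length = cs.length w ∧
    ∃ ω' : List (Fin n), ω'.Sublist ω ∧ cs.wordProd ω' = u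

/-- The localization pairing
`⟨f,g⟩ = Σ_{u∈W} f(u)·g(u) / ∏_{α∈Φ⁺} (1−e^{uα})(1−q e^{−uα})`. -/
def pairing [Fintype W] (σ : W →* (Λ ≃+ Λ)) (Φp : Finset Λ) (f g : W → Qf Λ) : Qf Λ :=
  ∑ u : W, f u * g u / ∏ a ∈ Φp, ((1 - E (σ u a)) * (1 - qh Λ ^ 2 * E (-(σ u a))))


set_option linter.unusedSectionVars false

lemma keyfield {K : Type*} [Field K] (x y q2 P fv gv : K) (hxy : x * y = 1)
    (h1x : 1 - x ≠ 0) (h1y : 1 - y ≠ 0) (h2x : 1 - q2 * x ≠ 0) (h2y : 1 - q2 * y ≠ 0)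
    (hP : P ≠ 0) :
    (1 - q2 * x) / (1 - y) * fv * gv / ((1 - y) * (1 - q2 * x) * P) =
      fv * ((q2 - x) / (1 - y) * gv) / ((1 - x) * (1 - q2 * y) * P) := by
  field_simp
  linear_combination fv * gv * (q2 - 1) * hxy

lemma E_mul {Λ : Type*} [AddCommGroup Λ] (a b : Λ) : E a * E b = E (a + b) := by
  unfold E
  rw [← map_mul]
  congr 1
  rw [AddMonoidAlgebra.single_mul_single, one_mul]

lemma E_zero {Λ : Type*} [AddCommGroup Λ] : E (0 : Λ) = 1 := by
  unfold E
  rw [← AddMonoidAlgebra.one_def, map_one]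

lemma E_ne_one {Λ : Type*} [AddCommGroup Λ]
    [IsDomain (AddMonoidAlgebra (LaurentPolynomial ℤ) Λ)] {l : Λ} (hl : l ≠ 0) : E l ≠ 1 := by
  unfold E
  rw [← map_one (algebraMap (AddMonoidAlgebra (LaurentPolynomial ℤ) Λ) (Qf Λ))]
  intro h
  have h1 := IsFractionRing.injective (AddMonoidAlgebra (LaurentPolynomial ℤ) Λ) (Qf Λ) h
  rw [show (1 : AddMonoidAlgebra (LaurentPolynomial ℤ) Λ) = AddMonoidAlgebra.single 0 1 from rfl] at h1
  rcases AddMonoidAlgebra.single_inj.mp h1 with ⟨h2, _⟩ | ⟨h2, _⟩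
  · exact hl h2
  · exact one_ne_zero h2

lemma qh_E_ne_one {Λ : Type*} [AddCommGroup Λ]
    [IsDomain (AddMonoidAlgebra (LaurentPolynomial ℤ) Λ)] (l : Λ) : qh Λ ^ 2 * E l ≠ 1 := by
  unfold qh E
  rw [← map_pow, ← map_mul,
    ← map_one (algebraMap (AddMonoidAlgebra (LaurentPolynomial ℤ) Λ) (Qf Λ))]
  intro h
  have h1 := IsFractionRing.injective (AddMonoidAlgebra (LaurentPolynomial ℤ) Λ) (Qf Λ) h
  rw [AddMonoidAlgebra.single_pow, AddMonoidAlgebra.single_mul_single,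
    show (1 : AddMonoidAlgebra (LaurentPolynomial ℤ) Λ) = AddMonoidAlgebra.single 0 1 from rfl,
    LaurentPolynomial.T_pow] at h1
  simp only [smul_zero, zero_add, mul_one] at h1
  rcases AddMonoidAlgebra.single_inj.mp h1 with ⟨_, h2⟩ | ⟨h2, _⟩
  · rw [LaurentPolynomial.T, AddMonoidAlgebra.one_def] at h2
    rcases AddMonoidAlgebra.single_inj.mp h2 with ⟨h3, _⟩ | ⟨h3, _⟩
    · norm_num at h3
    · exact one_ne_zero h3
  · rw [LaurentPolynomial.T] at h2
    exact one_ne_zero (AddMonoidAlgebra.single_eq_zero.mp h2)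

lemma E_neg_mul {Λ : Type*} [AddCommGroup Λ] (a : Λ) : E a * E (-a) = 1 := by
  rw [E_mul, add_neg_cancel, E_zero]

lemma one_sub_E_ne_zero {Λ : Type*} [AddCommGroup Λ]
    [IsDomain (AddMonoidAlgebra (LaurentPolynomial ℤ) Λ)] {l : Λ} (hl : l ≠ 0) :
    1 - E l ≠ 0 := by
  intro h
  exact E_ne_one hl (sub_eq_zero.mp h).symm

lemma one_sub_qhE_ne_zero {Λ : Type*} [AddCommGroup Λ]
    [IsDomain (AddMonoidAlgebra (LaurentPolynomial ℤ) Λ)] (l : Λ) :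
    1 - qh Λ ^ 2 * E l ≠ 0 :=
  fun h => qh_E_ne_one l (sub_eq_zero.mp h).symm

theorem TM_TP_adjoint [Fintype W]
    (σ : W →* (Λ ≃+ Λ)) (hfaith : Function.Injective σ)
    (Φp : Finset Λ) (α : Fin n → Λ) (αv : Fin n → (Λ →+ ℤ))
    (hαmem : ∀ i, α i ∈ Φp)
    (hrefl : ∀ (i : Fin n) (l : Λ), σ (cs.simple i) l = l - αv i l • α i)
    (hpair : ∀ i, αv i (α i) = 2)
    (hperm : ∀ i, ∀ b ∈ Φp, b ≠ α i → σ (cs.simple i) b ∈ Φp)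
    (hdisj : ∀ b ∈ Φp, -b ∉ Φp)
    (hreduced : ∀ b ∈ Φp, b + b ∉ Φp)
    (i : Fin n) (f g : W → Qf Λ) :
    pairing σ Φp (TM cs σ α i f) g = pairing σ Φp f (TP cs σ α i g) := by
  classical
  have hss : cs.simple i * cs.simple i = 1 := cs.simple_mul_simple_self i
  have hσmul : ∀ (w w' : W) (b : Λ), σ (w * w') b = σ w (σ w' b) := by
    intro w w' b
    rw [map_mul]
    rfl
  have hσss : ∀ b : Λ, σ (cs.simple i) (σ (cs.simple i) b) = b := by
    intro b
    rw [← hσmul, hss, map_one]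
    rfl
  have hα0 : α i ≠ 0 := by
    intro h
    have h2 := hpair i
    rw [h, map_zero] at h2
    norm_num at h2
  have h0Φ : (0 : Λ) ∉ Φp := fun h => hdisj 0 h (by simpa using h)
  have hσsα : σ (cs.simple i) (α i) = -(α i) := by
    rw [hrefl i (α i), hpair i, two_smul]
    abel
  have hβ0 : ∀ (u : W) (b : Λ), b ≠ 0 → σ u b ≠ 0 := by
    intro u b hb h
    exact hb ((σ u).injective (by simpa using h))
  have hus : ∀ u : W, σ (u * cs.simple i) (α i) = -(σ u (α i)) := by
    intro u
    rw [hσmul, hσsα, map_neg]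
  have hDprod : ∀ w : W, (∏ a ∈ Φp, ((1 - E (σ w a)) * (1 - qh Λ ^ 2 * E (-(σ w a))))) =
      ((1 - E (σ w (α i))) * (1 - qh Λ ^ 2 * E (-(σ w (α i))))) * (∏ a ∈ Φp.erase (α i), ((1 - E (σ w a)) * (1 - qh Λ ^ 2 * E (-(σ w a))))) :=
    fun w => (Finset.mul_prod_erase Φp _ (hαmem i)).symm
  have hPs : ∀ u : W, (∏ a ∈ Φp.erase (α i), ((1 - E (σ (u * cs.simple i) a)) * (1 - qh Λ ^ 2 * E (-(σ (u * cs.simple i) a))))) = (∏ a ∈ Φp.erase (α i), ((1 - E (σ u a)) * (1 - qh Λ ^ 2 * E (-(σ u a))))) := by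
    intro u
    refine Finset.prod_nbij' (fun a => σ (cs.simple i) a) (fun a => σ (cs.simple i) a) ?_ ?_
      (fun a _ => hσss a) (fun a _ => hσss a) ?_
    · intro a ha
      rw [Finset.mem_erase] at ha ⊢
      refine ⟨?_, hperm i a ha.2 ha.1⟩
      intro hcon
      have h3 : a = σ (cs.simple i) (α i) := by rw [← hcon, hσss]
      rw [hσsα] at h3
      exact hdisj a ha.2 (by rw [h3, neg_neg]; exact hαmem i)
    · intro a ha
      rw [Finset.mem_erase] at ha ⊢
      refine ⟨?_, hperm i a ha.2 ha.1⟩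
      intro hcon
      have h3 : a = σ (cs.simple i) (α i) := by rw [← hcon, hσss]
      rw [hσsα] at h3
      exact hdisj a ha.2 (by rw [h3, neg_neg]; exact hαmem i)
    · intro a _
      rw [hσmul]
  have hPne : ∀ u : W, (∏ a ∈ Φp.erase (α i), ((1 - E (σ u a)) * (1 - qh Λ ^ 2 * E (-(σ u a))))) ≠ 0 := by
    intro u
    apply Finset.prod_ne_zero_iff.mpr
    intro a ha
    have ha0 : a ≠ 0 := fun h => h0Φ (h ▸ Finset.mem_of_mem_erase ha)
    exact mul_ne_zero (one_sub_E_ne_zero (hβ0 u a ha0)) (one_sub_qhE_ne_zero _)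
  rw [pairing, pairing]
  have e1 : ∀ u : W,
      TM cs σ α i f u * g u / (∏ a ∈ Φp, ((1 - E (σ u a)) * (1 - qh Λ ^ 2 * E (-(σ u a))))) =
        (qh Λ ^ 2 - 1) / (1 - E (σ u (α i))) * f u * g u / (∏ a ∈ Φp, ((1 - E (σ u a)) * (1 - qh Λ ^ 2 * E (-(σ u a))))) +
          (1 - qh Λ ^ 2 * E (-(σ u (α i)))) / (1 - E (σ u (α i))) * f (u * cs.simple i) * g u /
            (∏ a ∈ Φp, ((1 - E (σ u a)) * (1 - qh Λ ^ 2 * E (-(σ u a))))) := by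
    intro u
    rw [TM]
    ring
  have e2 : ∀ u : W,
      f u * TP cs σ α i g u / (∏ a ∈ Φp, ((1 - E (σ u a)) * (1 - qh Λ ^ 2 * E (-(σ u a))))) =
        (qh Λ ^ 2 - 1) / (1 - E (σ u (α i))) * f u * g u / (∏ a ∈ Φp, ((1 - E (σ u a)) * (1 - qh Λ ^ 2 * E (-(σ u a))))) +
          f u * ((qh Λ ^ 2 - E (σ u (α i))) / (1 - E (-(σ u (α i)))) * g (u * cs.simple i)) /
            (∏ a ∈ Φp, ((1 - E (σ u a)) * (1 - qh Λ ^ 2 * E (-(σ u a))))) := by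
    intro u
    rw [TP]
    ring
  simp only [e1, e2]
  rw [Finset.sum_add_distrib, Finset.sum_add_distrib]
  congr 1
  rw [← Equiv.sum_comp (Equiv.mulRight (cs.simple i))
    (fun u => (1 - qh Λ ^ 2 * E (-(σ u (α i)))) / (1 - E (σ u (α i))) * f (u * cs.simple i) * g u /
      (∏ a ∈ Φp, ((1 - E (σ u a)) * (1 - qh Λ ^ 2 * E (-(σ u a))))))]
  apply Finset.sum_congr rfl
  intro u _
  simp only [Equiv.coe_mulRight]
  have h1 : u * cs.simple i * cs.simple i = u := by rw [mul_assoc, hss, mul_one]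
  rw [hDprod (u * cs.simple i), hDprod u, hPs u, h1, hus u, neg_neg]
  exact keyfield (E (σ u (α i))) (E (-(σ u (α i)))) (qh Λ ^ 2) _ (f u) (g (u * cs.simple i))
    (E_neg_mul _) (one_sub_E_ne_zero (hβ0 u _ hα0))
    (one_sub_E_ne_zero (neg_ne_zero.mpr (hβ0 u _ hα0)))
    (one_sub_qhE_ne_zero _) (one_sub_qhE_ne_zero _) (hPne u)
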